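/- arXiv:1811.02490 — 2 statements merged into one kernel-verified Lean document; each statement's English description precedes it below -/
import Mathlib

section
/- Let (Ψ,η) be an indexed root ideal of length ℓ, r ∈ [ℓ], p ∈ [r], and suppose: (1) η_r ≥ η_{r+1} ≥ … ≥ η_ℓ; (2) nr(Ψ)_i ≥ r−i for all i ∈ [r]; (3) style(Ψ,η)_i ≤ k for i ≤ r and style(Ψ,η)_i = min(k, ℓ−i+η_i) for i > r; (4) style(Ψ,η)_p < k; (5) if p < r and nr(Ψ)_p = nr(Ψ)_{p+1}, then nr(Ψ)_{p+1} ≤ nr(Ψ)_{p+2} and η_p = η_{p+1} − 1. Then H(Ψ;η) = Σ_{z ∈ downpath_Ψ(p), z = p or η_z > η_{z+1}} t^{B_Ψ(p,z)} H(Ψ^z; η + ε_p − ε_z), where Ψ^z := Ψ∖{(z, down_Ψ(z))} for z ≠ max(downpath_Ψ(p)), Ψ^z := Ψ for z = max(downpath_Ψ(p)), and η_{ℓ+1} := 0 in the condition for z = ℓ. -/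
open scoped BigOperators Classical

noncomputable section

/-- The coefficient ring `ℤ[t]`, with `t = Polynomial.X`. -/
abbrev CR : Type := Polynomial ℤ

/-- The ring of symmetric functions `Λ = ℤ[t][h₁,h₂,…]`, modeled as the polynomial
ring over `ℤ[t]` in countably many variables, where the variable `X n`
represents the complete homogeneous symmetric function `h_{n+1}`. -/
abbrev SymF : Type := MvPolynomial ℕ CR

/-- `t` as an element of `Λ`. -/
def tC : SymF := MvPolynomial.C Polynomial.X

/-- The complete homogeneous symmetric function `h_d` for `d : ℤ`:
`h_0 = 1` and `h_d = 0` for `d < 0`. -/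
def hh (d : ℤ) : SymF :=
  if d < 0 then 0 else if d = 0 then 1 else MvPolynomial.X (d.toNat - 1)

/-- The (possibly non-partition-indexed) Schur function
`s_γ = det (h_{γ_i + j - i})_{1 ≤ i,j ≤ ℓ}`. -/
def schur {ℓ : ℕ} (γ : Fin ℓ → ℤ) : SymF :=
  (Matrix.of fun i j : Fin ℓ => hh (γ i + (j : ℤ) - (i : ℤ))).det

/-- The poset of positive roots `Δ⁺_ℓ = {(i,j) : 1 ≤ i < j ≤ ℓ}` (0-based here). -/
def Dplus (ℓ : ℕ) : Finset (Fin ℓ × Fin ℓ) := Finset.univ.filter fun p => p.1 < p.2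

/-- `Ψ` is a root ideal: an upper order ideal of `Δ⁺_ℓ`, where
`(a,b) ≤ (c,d)` iff `a ≥ c` and `b ≤ d`. -/
def IsRootIdeal {ℓ : ℕ} (Ψ : Finset (Fin ℓ × Fin ℓ)) : Prop :=
  Ψ ⊆ Dplus ℓ ∧ ∀ p ∈ Ψ, ∀ q ∈ Dplus ℓ, q.1 ≤ p.1 → p.2 ≤ q.2 → q ∈ Ψ

/-- The Catalan function `H(Ψ;γ) = ∏_{(i,j) ∈ Ψ} (1 - t R_{ij})⁻¹ s_γ`, written out
as the (finitely supported) sum over all ways `n` of applying raising operators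
`R_{ij}` with `(i,j) ∈ Ψ`. -/
def catalanFn {ℓ : ℕ} (Ψ : Finset (Fin ℓ × Fin ℓ)) (γ : Fin ℓ → ℤ) : SymF :=
  ∑ᶠ n : Fin ℓ × Fin ℓ → ℕ,
    if ∀ p, p ∉ Ψ → n p = 0 then
      tC ^ (∑ p : Fin ℓ × Fin ℓ, n p) *
        schur (fun a => γ a + ∑ p : Fin ℓ × Fin ℓ,
          (n p : ℤ) * ((if p.1 = a then 1 else 0) - (if p.2 = a then 1 else 0)))
    else 0

/-- `nr(Ψ)_i`: the number of non-roots of `Ψ` in row `i` (0-based row index,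
extended by `0` out of range). -/
def nrN {ℓ : ℕ} (Ψ : Finset (Fin ℓ × Fin ℓ)) (i : ℕ) : ℕ :=
  ((Dplus ℓ \ Ψ).filter fun p => (p.1 : ℕ) = i).card

/-- `μ ∈ Par^k_ℓ`: a partition with at most `ℓ` parts, all of size at most `k`. -/
def IsPartitionK (k : ℕ) {ℓ : ℕ} (μ : Fin ℓ → ℕ) : Prop :=
  (∀ i j : Fin ℓ, i ≤ j → μ j ≤ μ i) ∧ ∀ i, μ i ≤ k

/-- The root ideal `Δᵏ(μ) = {(i,j) ∈ Δ⁺_ℓ : k - μ_i + i < j}` (1-based), here with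
0-based indices. -/
def Dk (k : ℕ) {ℓ : ℕ} (μ : Fin ℓ → ℕ) : Finset (Fin ℓ × Fin ℓ) :=
  (Dplus ℓ).filter fun p => (k : ℤ) - μ p.1 + (p.1 : ℤ) < (p.2 : ℤ)

/-- The `k`-Schur Catalan function `s^{(k)}_μ = H(Δᵏ(μ); μ)`. -/
def kSchur (k : ℕ) {ℓ : ℕ} (μ : Fin ℓ → ℕ) : SymF :=
  catalanFn (Dk k μ) fun i => (μ i : ℤ)

/-- The modified Hall–Littlewood polynomial `H_μ(x;t) = H(Δ⁺;μ)`. -/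
def hallLittlewood {ℓ : ℕ} (μ : Fin ℓ → ℕ) : SymF :=
  catalanFn (Dplus ℓ) fun i => (μ i : ℤ)

/-- `Λᵏ`, the `ℤ[t]`-span of the modified Hall–Littlewood polynomials `H_μ`
for `μ ∈ Par^k`. -/
def LambdaK (k : ℕ) : Submodule CR SymF :=
  Submodule.span CR {f | ∃ (ℓ : ℕ) (μ : Fin ℓ → ℕ),
    IsPartitionK k μ ∧ (∀ i, 0 < μ i) ∧ f = hallLittlewood μ}

/-- Extend a finite tuple by zeros. -/
def extendFin {ℓ : ℕ} (μ : Fin ℓ → ℕ) : ℕ → ℕ := fun i => if h : i < ℓ then μ ⟨i, h⟩ else 0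

/-- Extend a finite integer tuple by zeros. -/
def extendFinZ {ℓ : ℕ} (γ : Fin ℓ → ℤ) : ℕ → ℤ := fun i => if h : i < ℓ then γ ⟨i, h⟩ else 0

/-- `style(Ψ,γ)_i = nr(Ψ)_i + γ_i` (0-based row index `i`). -/
def styleZN {ℓ : ℕ} (Ψ : Finset (Fin ℓ × Fin ℓ)) (γ : Fin ℓ → ℤ) (i : ℕ) : ℤ :=
  (nrN Ψ i : ℤ) + extendFinZ γ i


section Bounce

/-- `down_Ψ(x) = y`, i.e. `(x,y)` is a removable root of the root ideal `Ψ`. -/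
def downRel {ℓ : ℕ} (Ψ : Finset (Fin ℓ × Fin ℓ)) (x y : Fin ℓ) : Prop :=
  (x, y) ∈ Ψ ∧ IsRootIdeal (Ψ.erase (x, y))

/-- The set of `y` with `down_Ψ(x) = y` (a singleton or empty, for a root ideal). -/
def downSet {ℓ : ℕ} (Ψ : Finset (Fin ℓ × Fin ℓ)) (x : Fin ℓ) : Finset (Fin ℓ) :=
  Finset.univ.filter fun y => downRel Ψ x y

/-- `z ∈ downpath_Ψ(p)`: `z` is obtained from `p` by iterating `down_Ψ`. -/
def inDownpath {ℓ : ℕ} (Ψ : Finset (Fin ℓ × Fin ℓ)) (p z : Fin ℓ) : Prop :=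
  Relation.ReflTransGen (downRel Ψ) p z

/-- The bounce `B_Ψ(p,z)`, the number of `down_Ψ` steps from `p` to `z`. -/
def bounceCount {ℓ : ℕ} (Ψ : Finset (Fin ℓ × Fin ℓ)) (p z : Fin ℓ) : ℕ :=
  Set.ncard {y | inDownpath Ψ p y ∧ inDownpath Ψ y z} - 1

/-- `Ψ^z`: `Ψ` with the removable root `(z, down_Ψ(z))` removed (and `Ψ^z = Ψ`
when `z` is the final element of its bounce path, i.e. row `z` has no removable root). -/
def PsiZ {ℓ : ℕ} (Ψ : Finset (Fin ℓ × Fin ℓ)) (z : Fin ℓ) : Finset (Fin ℓ × Fin ℓ) :=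
  Ψ \ (downSet Ψ z).image fun y => (z, y)

end Bounce

/-!
Splitting off the root `(z, down_Ψ(z))` via `H(Ψ;γ) = H(Ψ∖{(i,j)};γ) + t H(Ψ;γ + ε_i - ε_j)` and
iterating along the bounce path of `p` telescopes `H(Ψ;η)` into a sum over all of `downpath_Ψ(p)`.
It remains to see that a term with `z ≠ p` and `η_z ≤ η_{z+1}` vanishes. Such a `z` lies below
row `r`; for `z = ℓ` the last entry of the weight is negative. Otherwise condition (3) forces
`η_z = η_{z+1}` and makes rows `z` and `z + 1` of `Ψ^z` equal, so that the weight `η + ε_p - ε_z`,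
which has a descent of `-1` at `z`, would be killed by straightening with the transposition
`(z z+1)` if columns `z` and `z + 1` agreed too. Conditions (3)–(5) force a row `i` obstructing
this to be the row just below the predecessor `a` of `z` on the downpath, with the same weight as
`a`; adding the root `(i, z)` splits off a straightenable term and a term with the same
obstruction one step up the downpath, and the cascade ends at `p`.
-/

section CatalanFunctions

variable {ℓ : ℕ}

def rootVec (δ : Fin ℓ × Fin ℓ) : Fin ℓ → ℤ := Pi.single δ.1 1 - Pi.single δ.2 1

def raisingShift (n : Fin ℓ × Fin ℓ → ℕ) : Fin ℓ → ℤ := ∑ δ, (n δ : ℤ) • rootVec δ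

def catalanTerm (Ψ : Finset (Fin ℓ × Fin ℓ)) (γ : Fin ℓ → ℤ) (n : Fin ℓ × Fin ℓ → ℕ) : SymF :=
  if ∀ δ, δ ∉ Ψ → n δ = 0 then tC ^ (∑ δ, n δ) * schur (γ + raisingShift n) else 0

lemma catalanFn_eq_finsum (Ψ : Finset (Fin ℓ × Fin ℓ)) (γ : Fin ℓ → ℤ) :
    catalanFn Ψ γ = ∑ᶠ n, catalanTerm Ψ γ n := by
  have hshift : ∀ n a, raisingShift n a = ∑ δ : Fin ℓ × Fin ℓ,
      (n δ : ℤ) * ((if δ.1 = a then 1 else 0) - (if δ.2 = a then 1 else 0)) := by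
    intro n a
    simp [raisingShift, rootVec, Finset.sum_apply, Pi.single_apply, eq_comm]
  simp only [catalanFn, catalanTerm, Pi.add_def, hshift]

lemma raisingShift_add (m n : Fin ℓ × Fin ℓ → ℕ) :
    raisingShift (m + n) = raisingShift m + raisingShift n := by
  simp [raisingShift, add_smul, Finset.sum_add_distrib]

lemma raisingShift_single (δ : Fin ℓ × Fin ℓ) : raisingShift (Pi.single δ 1) = rootVec δ := by
  simp [raisingShift, Pi.single_apply]

lemma raisingShift_comp_perm (σ : Equiv.Perm (Fin ℓ)) (n : Fin ℓ × Fin ℓ → ℕ) :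
    raisingShift (n ∘ Prod.map σ σ) = raisingShift n ∘ σ := by
  ext a
  simp only [raisingShift, Function.comp_apply, Finset.sum_apply, Pi.smul_apply]
  conv_rhs => rw [← (σ.prodCongr σ).sum_comp]
  refine Finset.sum_congr rfl fun δ _ => ?_
  simp [rootVec, Pi.single_apply, Equiv.prodCongr_apply]

lemma sum_mul_raisingShift (n : Fin ℓ × Fin ℓ → ℕ) :
    ∑ a : Fin ℓ, (a : ℤ) * raisingShift n a =
      -∑ δ : Fin ℓ × Fin ℓ, (n δ : ℤ) * ((δ.2 : ℤ) - δ.1) := by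
  simp only [raisingShift, rootVec, Finset.sum_apply, Pi.smul_apply, Pi.sub_apply,
    Finset.mul_sum, smul_eq_mul]
  rw [Finset.sum_comm, ← Finset.sum_neg_distrib]
  refine Finset.sum_congr rfl fun δ _ => ?_
  simp [Pi.single_apply, mul_sub, Finset.sum_sub_distrib]
  ring

lemma schur_comp_perm (σ : Equiv.Perm (Fin ℓ)) (β : Fin ℓ → ℤ) :
    schur (fun a => β (σ a) + ((a : ℤ) - σ a)) = Equiv.Perm.sign σ * schur β := by
  rw [schur, schur, ← Matrix.det_permute]
  congr 1
  ext i j : 1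
  simp only [Matrix.of_apply, Matrix.submatrix_apply, id_eq]
  congr 1
  ring

lemma mem_Dplus_iff {δ : Fin ℓ × Fin ℓ} : δ ∈ Dplus ℓ ↔ δ.1 < δ.2 := by
  simp [Dplus]

lemma schur_eq_zero_of_row {γ : Fin ℓ → ℤ} (i : Fin ℓ) (h : γ i + (ℓ - 1 - i) < 0) :
    schur γ = 0 :=
  Matrix.det_eq_zero_of_row_eq_zero i fun j => if_pos (by omega)

lemma catalanTerm_ne_zero {Ψ : Finset (Fin ℓ × Fin ℓ)} {γ : Fin ℓ → ℤ}
    {n : Fin ℓ × Fin ℓ → ℕ} (h : catalanTerm Ψ γ n ≠ 0) :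
    (∀ δ, δ ∉ Ψ → n δ = 0) ∧ schur (γ + raisingShift n) ≠ 0 := by
  unfold catalanTerm at h
  split_ifs at h with hsupp
  · exact ⟨hsupp, right_ne_zero_of_mul h⟩
  · exact absurd rfl h

/-- Each raising operator lowers the moment `∑ a * γ a` by at least one, and the moment is bounded
below on weights with `schur ≠ 0`. -/
lemma apply_le_of_catalanTerm_ne_zero {Ψ : Finset (Fin ℓ × Fin ℓ)} (hΨ : Ψ ⊆ Dplus ℓ)
    {γ : Fin ℓ → ℤ} {n : Fin ℓ × Fin ℓ → ℕ} (h : catalanTerm Ψ γ n ≠ 0) (δ : Fin ℓ × Fin ℓ) :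
    (n δ : ℤ) ≤ ∑ a : Fin ℓ, (a : ℤ) * γ a + ℓ ^ 3 := by
  obtain ⟨hsupp, hschur⟩ := catalanTerm_ne_zero h
  have hgap : ∀ δ, (n δ : ℤ) ≤ n δ * ((δ.2 : ℤ) - δ.1) := by
    intro δ
    by_cases hδ : δ ∈ Ψ
    · have : (δ.1 : ℤ) < δ.2 := by exact_mod_cast mem_Dplus_iff.mp (hΨ hδ)
      nlinarith
    · simp [hsupp δ hδ]
  have hmoment : ∑ δ : Fin ℓ × Fin ℓ, (n δ : ℤ) * ((δ.2 : ℤ) - δ.1) =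
      ∑ a : Fin ℓ, (a : ℤ) * γ a - ∑ a : Fin ℓ, (a : ℤ) * (γ + raisingShift n) a := by
    simp only [Pi.add_apply, mul_add, Finset.sum_add_distrib, sum_mul_raisingShift]
    ring
  have hlower : -(ℓ : ℤ) ^ 3 ≤ ∑ a : Fin ℓ, (a : ℤ) * (γ + raisingShift n) a := by
    have hterm : ∀ a : Fin ℓ, -(ℓ : ℤ) ^ 2 ≤ (a : ℤ) * (γ + raisingShift n) a := by
      intro a
      have ha : (a : ℤ) < ℓ := by exact_mod_cast a.isLt
      have hpos : -(ℓ : ℤ) ≤ (γ + raisingShift n) a := by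
        by_contra! hlt
        exact hschur (schur_eq_zero_of_row a (by omega))
      nlinarith [a.val.cast_nonneg (α := ℤ)]
    calc -(ℓ : ℤ) ^ 3 = ∑ _a : Fin ℓ, -(ℓ : ℤ) ^ 2 := by simp; ring
      _ ≤ _ := Finset.sum_le_sum fun a _ => hterm a
  have hsingle : (n δ : ℤ) * ((δ.2 : ℤ) - δ.1) ≤
      ∑ δ : Fin ℓ × Fin ℓ, (n δ : ℤ) * ((δ.2 : ℤ) - δ.1) :=
    Finset.single_le_sum (fun δ _ => (Int.natCast_nonneg _).trans (hgap δ)) (Finset.mem_univ δ)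
  linarith [hgap δ]

lemma catalanTerm_support_finite {Ψ : Finset (Fin ℓ × Fin ℓ)} (hΨ : Ψ ⊆ Dplus ℓ)
    (γ : Fin ℓ → ℤ) : (Function.support (catalanTerm Ψ γ)).Finite := by
  refine (Set.Finite.pi fun _ => Set.finite_Iic (∑ a : Fin ℓ, (a : ℤ) * γ a + ℓ ^ 3).toNat).subset
    fun n hn δ _ => ?_
  have := apply_le_of_catalanTerm_ne_zero hΨ hn δ
  simp only [Set.mem_Iic]
  omega

lemma catalanTerm_erase (Ψ : Finset (Fin ℓ × Fin ℓ)) (δ : Fin ℓ × Fin ℓ) (γ : Fin ℓ → ℤ)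
    (n : Fin ℓ × Fin ℓ → ℕ) :
    catalanTerm (Ψ.erase δ) γ n = if n δ = 0 then catalanTerm Ψ γ n else 0 := by
  unfold catalanTerm
  split_ifs <;> grind

lemma catalanTerm_add_single {Ψ : Finset (Fin ℓ × Fin ℓ)} {δ : Fin ℓ × Fin ℓ} (hδ : δ ∈ Ψ)
    (γ : Fin ℓ → ℤ) (m : Fin ℓ × Fin ℓ → ℕ) :
    catalanTerm Ψ γ (m + Pi.single δ 1) = tC * catalanTerm Ψ (γ + rootVec δ) m := by
  have hsupp : (∀ ε, ε ∉ Ψ → (m + Pi.single δ 1 : Fin ℓ × Fin ℓ → ℕ) ε = 0) ↔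
      ∀ ε, ε ∉ Ψ → m ε = 0 := by
    refine forall₂_congr fun ε hε => ?_
    rw [Pi.add_apply, Pi.single_eq_of_ne (by rintro rfl; exact hε hδ), add_zero]
  have hweight : γ + raisingShift (m + Pi.single δ 1) = γ + rootVec δ + raisingShift m := by
    rw [raisingShift_add, raisingShift_single]
    abel
  unfold catalanTerm
  rw [if_congr hsupp rfl rfl, hweight]
  split_ifs
  · simp only [Pi.add_apply, Finset.sum_add_distrib, Finset.sum_pi_single', Finset.mem_univ,
      if_true, pow_succ]
    ring
  · rw [mul_zero]

lemma catalanFn_eq_erase_add {Ψ : Finset (Fin ℓ × Fin ℓ)} (hΨ : Ψ ⊆ Dplus ℓ)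
    {δ : Fin ℓ × Fin ℓ} (hδ : δ ∈ Ψ) (γ : Fin ℓ → ℤ) :
    catalanFn Ψ γ = catalanFn (Ψ.erase δ) γ + tC * catalanFn Ψ (γ + rootVec δ) := by
  have hsplit : ∀ n, catalanTerm Ψ γ n =
      catalanTerm (Ψ.erase δ) γ n + if n δ = 0 then 0 else catalanTerm Ψ γ n := by
    intro n
    rw [catalanTerm_erase]
    split_ifs <;> simp
  have hrange : Set.range (fun m : Fin ℓ × Fin ℓ → ℕ => m + Pi.single δ 1) =
      {n : Fin ℓ × Fin ℓ → ℕ | n δ ≠ 0} := by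
    ext n
    refine ⟨?_, fun hn => ⟨n - Pi.single δ 1, ?_⟩⟩
    · rintro ⟨m, rfl⟩
      simp
    · ext ε
      by_cases hε : ε = δ
      · subst hε
        simp only [Pi.add_apply, Pi.sub_apply, Pi.single_eq_same]
        exact Nat.sub_add_cancel (Nat.one_le_iff_ne_zero.mpr hn)
      · simp [Pi.single_eq_of_ne hε]
  have hshifted : ∑ᶠ n, (if n δ = 0 then 0 else catalanTerm Ψ γ n) =
      tC * ∑ᶠ m, catalanTerm Ψ (γ + rootVec δ) m := by
    rw [mul_finsum]
    simp_rw [← catalanTerm_add_single hδ]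
    rw [← finsum_mem_range (add_left_injective _), hrange, finsum_mem_def]
    refine finsum_congr fun n => ?_
    by_cases hn : n δ = 0 <;> simp [hn]
  rw [catalanFn_eq_finsum, catalanFn_eq_finsum, catalanFn_eq_finsum, finsum_congr hsplit,
    finsum_add_distrib (catalanTerm_support_finite ((Finset.erase_subset δ Ψ).trans hΨ) γ)
      ((catalanTerm_support_finite hΨ γ).subset fun n hn h0 => hn (by simp [h0])), hshifted]

lemma catalanFn_eq_insert_sub {Φ : Finset (Fin ℓ × Fin ℓ)} (hΦ : Φ ⊆ Dplus ℓ)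
    {δ : Fin ℓ × Fin ℓ} (hδ : δ ∉ Φ) (hδD : δ ∈ Dplus ℓ) (γ : Fin ℓ → ℤ) :
    catalanFn Φ γ = catalanFn (insert δ Φ) γ - tC * catalanFn (insert δ Φ) (γ + rootVec δ) := by
  rw [catalanFn_eq_erase_add (Finset.insert_subset hδD hΦ) (Finset.mem_insert_self δ Φ),
    Finset.erase_insert hδ, add_sub_cancel_right]

lemma catalanTerm_comp_perm {Φ : Finset (Fin ℓ × Fin ℓ)} {σ : Equiv.Perm (Fin ℓ)}
    (hΦ : ∀ i j, (σ i, σ j) ∈ Φ ↔ (i, j) ∈ Φ) {γ : Fin ℓ → ℤ}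
    (hγ : ∀ a, γ a = γ (σ a) + ((a : ℤ) - σ a)) (n : Fin ℓ × Fin ℓ → ℕ) :
    catalanTerm Φ γ (n ∘ Prod.map σ σ) = Equiv.Perm.sign σ * catalanTerm Φ γ n := by
  have hsupp : (∀ δ, δ ∉ Φ → (n ∘ Prod.map σ σ) δ = 0) ↔ ∀ δ, δ ∉ Φ → n δ = 0 := by
    refine ⟨fun h δ hδ => ?_, fun h δ hδ => h _ fun hm => hδ ((hΦ δ.1 δ.2).mp hm)⟩
    simpa using h (σ.symm δ.1, σ.symm δ.2) fun hm => hδ (by simpa using (hΦ _ _).mpr hm)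
  have hsum : ∑ δ, (n ∘ Prod.map σ σ) δ = ∑ δ, n δ := (σ.prodCongr σ).sum_comp n
  have hweight : γ + raisingShift (n ∘ Prod.map σ σ) =
      fun a => (γ + raisingShift n) (σ a) + ((a : ℤ) - σ a) := by
    ext a
    rw [raisingShift_comp_perm, Pi.add_apply, Function.comp_apply, Pi.add_apply, hγ a]
    ring
  unfold catalanTerm
  rw [if_congr hsupp rfl rfl, hsum, hweight, schur_comp_perm]
  split_ifs <;> ring

/-- The straightening relation `H(Φ;γ) = -H(Φ;s_z γ)` in the case `s_z γ = γ`, where `s_z` is the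
dot action of the transposition `(z z+1)`. -/
lemma catalanFn_eq_zero_of_swap_invariant {Φ : Finset (Fin ℓ × Fin ℓ)} {z w : Fin ℓ}
    (hw : (w : ℕ) = z + 1)
    (hΦ : ∀ i j, (Equiv.swap z w i, Equiv.swap z w j) ∈ Φ ↔ (i, j) ∈ Φ)
    {γ : Fin ℓ → ℤ} (hγ : γ z = γ w - 1) : catalanFn Φ γ = 0 := by
  have hzw : z ≠ w := fun h => by rw [h] at hw; omega
  have hγσ : ∀ a, γ a = γ (Equiv.swap z w a) + ((a : ℤ) - Equiv.swap z w a) := by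
    intro a
    rcases eq_or_ne a z with rfl | haz
    · rw [Equiv.swap_apply_left]; omega
    rcases eq_or_ne a w with rfl | haw
    · rw [Equiv.swap_apply_right]; omega
    rw [Equiv.swap_apply_of_ne_of_ne haz haw]; ring
  have hinv : Function.Involutive fun n : Fin ℓ × Fin ℓ → ℕ =>
      n ∘ Prod.map (Equiv.swap z w) (Equiv.swap z w) := by
    intro n
    ext ⟨a, b⟩
    simp
  have hneg : ∑ᶠ n, catalanTerm Φ γ n = -∑ᶠ n, catalanTerm Φ γ n :=
    calc ∑ᶠ n, catalanTerm Φ γ n = ∑ᶠ n, catalanTerm Φ γ (Function.Involutive.toPerm _ hinv n) :=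
          (finsum_comp_equiv _).symm
      _ = ∑ᶠ n, -catalanTerm Φ γ n := finsum_congr fun n => by
          rw [Function.Involutive.coe_toPerm, catalanTerm_comp_perm hΦ hγσ,
            Equiv.Perm.sign_swap hzw]
          push_cast
          ring
      _ = -∑ᶠ n, catalanTerm Φ γ n := finsum_neg_distrib _
  rw [catalanFn_eq_finsum]
  exact self_eq_neg.mp hneg

lemma swap_mem_iff_of_rows_cols {Φ : Finset (Fin ℓ × Fin ℓ)} (hΦ : Φ ⊆ Dplus ℓ) {z w : Fin ℓ}
    (hw : (w : ℕ) = z + 1) (hzw : (z, w) ∉ Φ) (hrow : ∀ j, (z, j) ∈ Φ ↔ (w, j) ∈ Φ)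
    (hcol : ∀ i : Fin ℓ, (i : ℕ) < z → ((i, z) ∈ Φ ↔ (i, w) ∈ Φ)) (i j : Fin ℓ) :
    (Equiv.swap z w i, Equiv.swap z w j) ∈ Φ ↔ (i, j) ∈ Φ := by
  have hlt : ∀ {a b : Fin ℓ}, (a, b) ∈ Φ → (a : ℕ) < b := fun h => mem_Dplus_iff.mp (hΦ h)
  have hswap_row : ∀ a b, (Equiv.swap z w a, b) ∈ Φ ↔ (a, b) ∈ Φ := by
    intro a b
    rw [Equiv.swap_apply_def]
    split_ifs with haz haw
    · subst haz
      exact (hrow b).symm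
    · subst haw
      exact hrow b
    · rfl
  have hswap_col : ∀ a b, (a, Equiv.swap z w b) ∈ Φ ↔ (a, b) ∈ Φ := by
    have hzw' : ∀ a, (a, z) ∈ Φ ↔ (a, w) ∈ Φ := by
      intro a
      rcases lt_or_ge (a : ℕ) z with ha | ha
      · exact hcol a ha
      rcases eq_or_ne a z with rfl | haz
      · exact iff_of_false (fun h => (hlt h).false) hzw
      · exact iff_of_false (fun h => by have := hlt h; omega)
          (fun h => by have := hlt h; have : (a : ℕ) ≠ z := Fin.val_ne_of_ne haz; omega)
    intro a b
    rw [Equiv.swap_apply_def]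
    split_ifs with hbz hbw
    · subst hbz
      exact (hzw' a).symm
    · subst hbw
      exact hzw' a
    · rfl
  rw [hswap_row, hswap_col]

lemma catalanFn_eq_zero_of_last_neg {Φ : Finset (Fin ℓ × Fin ℓ)} (hΦ : Φ ⊆ Dplus ℓ)
    {γ : Fin ℓ → ℤ} {z : Fin ℓ} (hz : (z : ℕ) + 1 = ℓ) (hneg : γ z < 0) :
    catalanFn Φ γ = 0 := by
  rw [catalanFn_eq_finsum]
  refine finsum_eq_zero_of_forall_eq_zero fun n => ?_
  by_contra hne
  obtain ⟨hsupp, hschur⟩ := catalanTerm_ne_zero hne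
  have hshift : raisingShift n z ≤ 0 := by
    simp only [raisingShift, rootVec, Finset.sum_apply, Pi.smul_apply, Pi.sub_apply, smul_eq_mul]
    refine Finset.sum_nonpos fun δ _ => ?_
    by_cases hδ : δ ∈ Φ
    · have h12 : (δ.1 : ℕ) < δ.2 := mem_Dplus_iff.mp (hΦ hδ)
      have : z ≠ δ.1 := fun h => by have := δ.2.isLt; omega
      rw [Pi.single_eq_of_ne this]
      simp only [Pi.single_apply]
      split_ifs <;> simp
    · simp [hsupp δ hδ]
  exact hschur (schur_eq_zero_of_row z (by simp only [Pi.add_apply]; omega))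

end CatalanFunctions

section RootIdeals

variable {ℓ : ℕ} {Ψ : Finset (Fin ℓ × Fin ℓ)}

lemma IsRootIdeal.lt (hΨ : IsRootIdeal Ψ) {i j : Fin ℓ} (h : (i, j) ∈ Ψ) : i < j :=
  mem_Dplus_iff.mp (hΨ.1 h)

lemma IsRootIdeal.mem_of_le (hΨ : IsRootIdeal Ψ) {i j i' j' : Fin ℓ} (h : (i, j) ∈ Ψ)
    (hi : i' ≤ i) (hj : j ≤ j') : (i', j') ∈ Ψ :=
  hΨ.2 _ h _ (mem_Dplus_iff.mpr ((hi.trans_lt (hΨ.lt h)).trans_le hj)) hi hj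

def rowStart (Ψ : Finset (Fin ℓ × Fin ℓ)) (i : ℕ) : ℕ := i + nrN Ψ i + 1

lemma nrN_le_card_of_subset {i : Fin ℓ} {s : Finset (Fin ℓ)}
    (h : ∀ j, i < j → (i, j) ∉ Ψ → j ∈ s) : nrN Ψ i ≤ s.card := by
  rw [nrN, ← Finset.card_image_of_injective s (Prod.mk_right_injective i)]
  refine Finset.card_le_card fun δ hδ => ?_
  obtain ⟨⟨hD, hΨδ⟩, hδi⟩ := by simpa only [Finset.mem_filter, Finset.mem_sdiff] using hδ
  obtain rfl : δ.1 = i := Fin.ext hδi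
  exact Finset.mem_image_of_mem _ (h δ.2 (mem_Dplus_iff.mp hD) hΨδ)

lemma card_le_nrN_of_subset {i : Fin ℓ} {s : Finset (Fin ℓ)}
    (h : ∀ j ∈ s, i < j ∧ (i, j) ∉ Ψ) : s.card ≤ nrN Ψ i := by
  rw [nrN, ← Finset.card_image_of_injective s (Prod.mk_right_injective i)]
  refine Finset.card_le_card fun δ hδ => ?_
  obtain ⟨j, hj, rfl⟩ := Finset.mem_image.mp hδ
  simpa [mem_Dplus_iff] using h j hj

lemma rowStart_le (i : Fin ℓ) : rowStart Ψ i ≤ ℓ := by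
  have := nrN_le_card_of_subset (Ψ := Ψ) (s := Finset.Ioi i) fun j hij _ => Finset.mem_Ioi.mpr hij
  rw [Fin.card_Ioi] at this
  have := i.isLt
  unfold rowStart
  omega

lemma IsRootIdeal.mem_iff_rowStart_le (hΨ : IsRootIdeal Ψ) (i j : Fin ℓ) :
    (i, j) ∈ Ψ ↔ rowStart Ψ i ≤ j := by
  unfold rowStart
  constructor
  · intro h
    have := nrN_le_card_of_subset (s := Finset.Ioo i j) fun j' hij' hj' =>
      Finset.mem_Ioo.mpr ⟨hij', lt_of_not_ge fun hjj' => hj' (hΨ.mem_of_le h le_rfl hjj')⟩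
    rw [Fin.card_Ioo] at this
    have := Fin.lt_def.mp (hΨ.lt h)
    omega
  · intro h
    by_contra hn
    have := card_le_nrN_of_subset (Ψ := Ψ) (s := Finset.Ioc i j) fun j' hj' =>
      ⟨(Finset.mem_Ioc.mp hj').1, fun h' => hn (hΨ.mem_of_le h' le_rfl (Finset.mem_Ioc.mp hj').2)⟩
    rw [Fin.card_Ioc] at this
    omega

lemma IsRootIdeal.rowStart_mono (hΨ : IsRootIdeal Ψ) {i i' : ℕ} (h : i ≤ i') (hi' : i' < ℓ) :
    rowStart Ψ i ≤ rowStart Ψ i' := by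
  rcases lt_or_ge (rowStart Ψ i') ℓ with hlt | hge
  · have hmem := (hΨ.mem_iff_rowStart_le ⟨i', hi'⟩ ⟨_, hlt⟩).mpr le_rfl
    exact (hΨ.mem_iff_rowStart_le ⟨i, by omega⟩ _).mp
      (hΨ.mem_of_le hmem (Fin.mk_le_mk.mpr h) le_rfl)
  · exact (rowStart_le (⟨i, by omega⟩ : Fin ℓ)).trans hge

lemma IsRootIdeal.downRel_iff (hΨ : IsRootIdeal Ψ) {x y : Fin ℓ} :
    downRel Ψ x y ↔ (y : ℕ) = rowStart Ψ x ∧ rowStart Ψ x < rowStart Ψ (x + 1) := by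
  constructor
  · rintro ⟨hmem, hroot⟩
    have hle := (hΨ.mem_iff_rowStart_le x y).mp hmem
    have hstays : ∀ a b : Fin ℓ, (a, b) ∈ Ψ → (a, b) ≠ (x, y) → x ≤ a → b ≤ y → False :=
      fun a b hab hne h1 h2 => Finset.notMem_erase _ _
        (hroot.2 _ (Finset.mem_erase.mpr ⟨hne, hab⟩) _ (hΨ.1 hmem) h1 h2)
    refine ⟨le_antisymm ?_ hle, lt_of_not_ge fun hge => ?_⟩
    · by_contra! hlt
      refine hstays x ⟨_, hlt.trans y.isLt⟩ ((hΨ.mem_iff_rowStart_le _ _).mpr le_rfl) ?_ le_rfl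
        (Fin.le_def.mpr hlt.le)
      simp [Fin.ext_iff, hlt.ne]
    · have hx : (x : ℕ) + 1 < ℓ := by have := y.isLt; simp only [rowStart] at hge hle; omega
      refine hstays ⟨x + 1, hx⟩ y ((hΨ.mem_iff_rowStart_le _ _).mpr (hge.trans hle)) ?_
        (Fin.le_def.mpr (Nat.le_succ _)) le_rfl
      simp [Fin.ext_iff]
  · rintro ⟨hy, hlt⟩
    have hmem : (x, y) ∈ Ψ := (hΨ.mem_iff_rowStart_le x y).mpr hy.ge
    refine ⟨hmem, (Finset.erase_subset _ _).trans hΨ.1, fun ⟨a, b⟩ hab ε hε h1 h2 => ?_⟩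
    obtain ⟨hne, habΨ⟩ := Finset.mem_erase.mp hab
    refine Finset.mem_erase.mpr ⟨?_, hΨ.2 _ habΨ ε hε h1 h2⟩
    rintro rfl
    have hb := (hΨ.mem_iff_rowStart_le a b).mp habΨ
    have h1 : (x : ℕ) ≤ a := h1
    have h2 : (b : ℕ) ≤ y := h2
    rcases h1.eq_or_lt with heq | hgt
    · obtain rfl : x = a := Fin.ext heq
      exact hne (Prod.ext rfl (Fin.ext (show (b : ℕ) = y by omega)))
    · have := hΨ.rowStart_mono (show (x : ℕ) + 1 ≤ a by omega) a.isLt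
      omega

lemma IsRootIdeal.lt_of_downRel (hΨ : IsRootIdeal Ψ) {x y : Fin ℓ} (h : downRel Ψ x y) : x < y :=
  hΨ.lt h.1

lemma IsRootIdeal.downRel_unique (hΨ : IsRootIdeal Ψ) {x y y' : Fin ℓ} (h : downRel Ψ x y)
    (h' : downRel Ψ x y') : y = y' :=
  Fin.ext ((hΨ.downRel_iff.mp h).1.trans (hΨ.downRel_iff.mp h').1.symm)

lemma IsRootIdeal.PsiZ_eq_erase (hΨ : IsRootIdeal Ψ) {x y : Fin ℓ} (h : downRel Ψ x y) :
    PsiZ Ψ x = Ψ.erase (x, y) := by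
  have : downSet Ψ x = {y} := by
    ext y'
    simpa [downSet] using ⟨fun h' => hΨ.downRel_unique h' h, fun h' => h' ▸ h⟩
  rw [PsiZ, this, Finset.image_singleton, Finset.sdiff_singleton_eq_erase]

lemma PsiZ_eq_self {x : Fin ℓ} (h : ∀ y, ¬downRel Ψ x y) : PsiZ Ψ x = Ψ := by
  simp [PsiZ, downSet, h]

lemma mem_PsiZ_of_ne {x i : Fin ℓ} (hi : i ≠ x) (j : Fin ℓ) : (i, j) ∈ PsiZ Ψ x ↔ (i, j) ∈ Ψ := by
  simp [PsiZ, Ne.symm hi]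

lemma IsRootIdeal.notMem_PsiZ_succ (hΨ : IsRootIdeal Ψ) {x w : Fin ℓ} (hw : (w : ℕ) = x + 1) :
    (x, w) ∉ PsiZ Ψ x := by
  intro h
  have hmem : (x, w) ∈ Ψ := Finset.sdiff_subset h
  have hdown : downRel Ψ x w := by
    have := (hΨ.mem_iff_rowStart_le x w).mp hmem
    refine hΨ.downRel_iff.mpr ⟨?_, ?_⟩ <;> simp only [rowStart] at this ⊢ <;> omega
  rw [hΨ.PsiZ_eq_erase hdown] at h
  exact Finset.notMem_erase _ _ h

lemma IsRootIdeal.mem_PsiZ_iff_succ (hΨ : IsRootIdeal Ψ) {x w : Fin ℓ} (hw : (w : ℕ) = x + 1)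
    (hstart : rowStart Ψ w ≤ rowStart Ψ x + 1) (j : Fin ℓ) :
    (x, j) ∈ PsiZ Ψ x ↔ (w, j) ∈ PsiZ Ψ x := by
  have hwx : w ≠ x := fun h => by rw [h] at hw; omega
  rw [mem_PsiZ_of_ne hwx, hΨ.mem_iff_rowStart_le w]
  have hmono := hΨ.rowStart_mono (show (x : ℕ) ≤ w by omega) w.isLt
  have hsucc : rowStart Ψ (x + 1) = rowStart Ψ w := by rw [hw]
  rcases hmono.eq_or_lt with heq | hlt
  · have hnone : ∀ y, ¬downRel Ψ x y := fun y h => by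
      have := (hΨ.downRel_iff.mp h).2
      omega
    rw [PsiZ_eq_self hnone, hΨ.mem_iff_rowStart_le, ← heq]
  · have hdown : downRel Ψ x ⟨rowStart Ψ x, by have := rowStart_le (Ψ := Ψ) w; omega⟩ :=
      hΨ.downRel_iff.mpr ⟨rfl, hsucc ▸ hlt⟩
    rw [hΨ.PsiZ_eq_erase hdown, Finset.mem_erase, hΨ.mem_iff_rowStart_le]
    simp only [ne_eq, Prod.mk.injEq, true_and, Fin.ext_iff]
    omega

lemma IsRootIdeal.le_of_inDownpath (hΨ : IsRootIdeal Ψ) {p z : Fin ℓ} (h : inDownpath Ψ p z) :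
    p ≤ z := by
  induction h with
  | refl => exact le_rfl
  | tail _ hstep ih => exact ih.trans (hΨ.lt_of_downRel hstep).le

lemma IsRootIdeal.inDownpath_iff_of_downRel (hΨ : IsRootIdeal Ψ) {q y : Fin ℓ}
    (hqy : downRel Ψ q y) (z : Fin ℓ) : inDownpath Ψ q z ↔ z = q ∨ inDownpath Ψ y z := by
  refine ⟨fun h => ?_, ?_⟩
  · rcases Relation.ReflTransGen.cases_head h with rfl | ⟨y', hqy', hy'z⟩
    · exact Or.inl rfl
    · exact Or.inr (hΨ.downRel_unique hqy' hqy ▸ hy'z)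
  · rintro (rfl | h)
    · exact Relation.ReflTransGen.refl
    · exact Relation.ReflTransGen.head hqy h

lemma inDownpath_iff_of_forall_not_downRel {q : Fin ℓ} (h : ∀ y, ¬downRel Ψ q y) (z : Fin ℓ) :
    inDownpath Ψ q z ↔ z = q := by
  refine ⟨fun hz => ?_, fun hz => hz ▸ Relation.ReflTransGen.refl⟩
  rcases Relation.ReflTransGen.cases_head hz with rfl | ⟨y, hqy, -⟩
  · rfl
  · exact (h y hqy).elim

lemma IsRootIdeal.bounceCount_self (hΨ : IsRootIdeal Ψ) (q : Fin ℓ) : bounceCount Ψ q q = 0 := by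
  have : {y | inDownpath Ψ q y ∧ inDownpath Ψ y q} = {q} := by
    ext y
    refine ⟨fun h => le_antisymm (hΨ.le_of_inDownpath h.2) (hΨ.le_of_inDownpath h.1), ?_⟩
    rintro rfl
    exact ⟨Relation.ReflTransGen.refl, Relation.ReflTransGen.refl⟩
  rw [bounceCount, this, Set.ncard_singleton]

lemma IsRootIdeal.bounceCount_of_downRel (hΨ : IsRootIdeal Ψ) {q y z : Fin ℓ}
    (hqy : downRel Ψ q y) (hyz : inDownpath Ψ y z) :
    bounceCount Ψ q z = bounceCount Ψ y z + 1 := by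
  set S := {w | inDownpath Ψ y w ∧ inDownpath Ψ w z}
  have hq : q ∉ S := fun h => (hΨ.le_of_inDownpath h.1).not_gt (hΨ.lt_of_downRel hqy)
  have hins : {w | inDownpath Ψ q w ∧ inDownpath Ψ w z} = insert q S := by
    ext w
    simp only [Set.mem_ofPred_eq, Set.mem_insert_iff, hΨ.inDownpath_iff_of_downRel hqy, S]
    constructor
    · rintro ⟨rfl | h, h'⟩
      · exact Or.inl rfl
      · exact Or.inr ⟨h, h'⟩
    · rintro (rfl | ⟨h, h'⟩)
      · exact ⟨Or.inl rfl, Relation.ReflTransGen.head hqy hyz⟩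
      · exact ⟨Or.inr h, h'⟩
  have hpos : S.ncard ≠ 0 :=
    (Set.ncard_pos (Set.toFinite S)).mpr ⟨y, Relation.ReflTransGen.refl, hyz⟩ |>.ne'
  rw [bounceCount, bounceCount, hins, Set.ncard_insert_of_notMem hq (Set.toFinite S)]
  change S.ncard + 1 - 1 = S.ncard - 1 + 1
  omega

end RootIdeals

section Downpaths

variable {ℓ : ℕ} {Ψ : Finset (Fin ℓ × Fin ℓ)}

theorem IsRootIdeal.catalanFn_eq_sum_downpath (hΨ : IsRootIdeal Ψ) (γ : Fin ℓ → ℤ) (q : Fin ℓ) :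
    catalanFn Ψ (γ - Pi.single q 1) = ∑ z ∈ Finset.univ.filter (inDownpath Ψ q),
      tC ^ bounceCount Ψ q z * catalanFn (PsiZ Ψ z) (γ - Pi.single z 1) := by
  induction q using WellFoundedGT.induction with
  | _ q ih =>
  by_cases hdown : ∃ y, downRel Ψ q y
  · obtain ⟨y, hqy⟩ := hdown
    have hfilter : Finset.univ.filter (inDownpath Ψ q) =
        insert q (Finset.univ.filter (inDownpath Ψ y)) := by
      ext z
      simp [hΨ.inDownpath_iff_of_downRel hqy]
    have hq : q ∉ Finset.univ.filter (inDownpath Ψ y) := fun h =>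
      (hΨ.le_of_inDownpath (Finset.mem_filter.mp h).2).not_gt (hΨ.lt_of_downRel hqy)
    have hweight : γ - Pi.single q 1 + rootVec (q, y) = γ - Pi.single y 1 := by
      rw [rootVec]
      abel
    rw [catalanFn_eq_erase_add hΨ.1 hqy.1, ← hΨ.PsiZ_eq_erase hqy, hweight,
      ih y (hΨ.lt_of_downRel hqy), hfilter, Finset.sum_insert hq, hΨ.bounceCount_self,
      pow_zero, one_mul, Finset.mul_sum]
    refine congrArg _ (Finset.sum_congr rfl fun z hz => ?_)
    rw [hΨ.bounceCount_of_downRel hqy (Finset.mem_filter.mp hz).2, pow_succ]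
    ring
  · simp only [not_exists] at hdown
    have hfilter : Finset.univ.filter (inDownpath Ψ q) = {q} := by
      ext z
      simp [inDownpath_iff_of_forall_not_downRel hdown]
    rw [hfilter, Finset.sum_singleton, hΨ.bounceCount_self, PsiZ_eq_self hdown, pow_zero, one_mul]

lemma catalanFn_eq_zero_of_rows_cols {Φ : Finset (Fin ℓ × Fin ℓ)} (hΦ : Φ ⊆ Dplus ℓ)
    {z w : Fin ℓ} (hw : (w : ℕ) = z + 1) (hzw : (z, w) ∉ Φ)
    (hrow : ∀ j, (z, j) ∈ Φ ↔ (w, j) ∈ Φ)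
    (hcol : ∀ i : Fin ℓ, (i : ℕ) < z → ((i, z) ∈ Φ ↔ (i, w) ∈ Φ))
    {γ : Fin ℓ → ℤ} (hγ : γ z = γ w - 1) : catalanFn Φ γ = 0 :=
  catalanFn_eq_zero_of_swap_invariant hw (swap_mem_iff_of_rows_cols hΦ hw hzw hrow hcol) hγ

lemma catalanFn_insert_eq_zero {Φ : Finset (Fin ℓ × Fin ℓ)} (hΦ : Φ ⊆ Dplus ℓ) {q w i : Fin ℓ}
    (hw : (w : ℕ) = q + 1) (hqw : (q, w) ∉ Φ) (hrow : ∀ j, (q, j) ∈ Φ ↔ (w, j) ∈ Φ)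
    (habove : ∀ i' : Fin ℓ, (i' : ℕ) < q → ∀ j, (i', j) ∈ Φ ↔ rowStart Ψ i' ≤ j)
    (hiq : (i : ℕ) < q) (hi : rowStart Ψ i = w)
    (huniq : ∀ i' : Fin ℓ, (i' : ℕ) < q → rowStart Ψ i' = w → i' = i)
    {γ : Fin ℓ → ℤ} (hγ : γ q = γ w - 1) : catalanFn (insert (i, q) Φ) γ = 0 := by
  have hmem : ∀ x j, (x, j) ∈ insert (i, q) Φ ↔ (x = i ∧ j = q) ∨ (x, j) ∈ Φ := by
    simp [Prod.ext_iff]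
  have hrow_ne : ∀ x : Fin ℓ, (i : ℕ) < x → ∀ j, (x, j) ∈ insert (i, q) Φ ↔ (x, j) ∈ Φ :=
    fun x hx j => by simp [hmem, Fin.ne_of_val_ne hx.ne']
  refine catalanFn_eq_zero_of_rows_cols (Finset.insert_subset (mem_Dplus_iff.mpr hiq) hΦ) hw
    ?_ (fun j => ?_) (fun i' hi' => ?_) hγ
  · rwa [hrow_ne q hiq]
  · rw [hrow_ne q hiq, hrow_ne w (by omega)]
    exact hrow j
  · rw [hmem, hmem, habove i' hi', habove i' hi']
    constructor
    · rintro (⟨rfl, -⟩ | h) <;> right <;> omega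
    · rintro (⟨-, h⟩ | h)
      · exact absurd (congrArg Fin.val h) (by omega)
      · by_cases h' : rowStart Ψ i' = w
        · exact Or.inl ⟨huniq i' hi' h', rfl⟩
        · right; omega

def DownpathAligned (Ψ : Finset (Fin ℓ × Fin ℓ)) (ζ : Fin ℓ → ℤ) (P : Fin ℓ) : Prop :=
  ∀ a q i : Fin ℓ, inDownpath Ψ P a → downRel Ψ a q → (q : ℕ) + 1 < ℓ → (i : ℕ) < q →
    rowStart Ψ i = q + 1 →
      (i : ℕ) = a + 1 ∧ ζ a = ζ i ∧ (a = P → ∀ j : Fin ℓ, (j : ℕ) < a → rowStart Ψ j ≠ a + 1)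

/-- A row `i` above `q` starting in column `q + 1` obstructs straightening at `q`; inserting the
root `(i, q)` gives one straightenable term and one term with the same configuration one step up
the downpath. -/
theorem IsRootIdeal.catalanFn_eq_zero_of_downpathAligned (hΨ : IsRootIdeal Ψ) {ζ : Fin ℓ → ℤ}
    {P : Fin ℓ} (hal : DownpathAligned Ψ ζ P) (q : Fin ℓ) :
    ∀ w : Fin ℓ, inDownpath Ψ P q → (w : ℕ) = q + 1 →
      (q = P → ∀ j : Fin ℓ, (j : ℕ) < q → rowStart Ψ j ≠ w) →
    ∀ (Φ : Finset (Fin ℓ × Fin ℓ)) (γ : Fin ℓ → ℤ), Φ ⊆ Dplus ℓ →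
      (∀ i : Fin ℓ, (i : ℕ) < q → ∀ j, (i, j) ∈ Φ ↔ (i, j) ∈ Ψ) →
      (∀ j, (q, j) ∈ Φ ↔ (w, j) ∈ Φ) → (q, w) ∉ Φ → γ q = γ w - 1 →
      (∀ i : Fin ℓ, (i : ℕ) < q → γ i = ζ i) → catalanFn Φ γ = 0 := by
  induction q using WellFoundedLT.induction with
  | _ q ih =>
  intro w hPq hw hqP Φ γ hΦ habove hrow hqw hγ hγζ
  have hmemΦ : ∀ i : Fin ℓ, (i : ℕ) < q → ∀ j, (i, j) ∈ Φ ↔ rowStart Ψ i ≤ j :=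
    fun i hi j => (habove i hi j).trans (hΨ.mem_iff_rowStart_le i j)
  by_cases hbad : ∃ i : Fin ℓ, (i : ℕ) < q ∧ rowStart Ψ i = w
  swap
  · refine catalanFn_eq_zero_of_rows_cols hΦ hw hqw hrow (fun i hi => ?_) hγ
    have : rowStart Ψ i ≠ w := fun h => hbad ⟨i, hi, h⟩
    rw [hmemΦ i hi, hmemΦ i hi]
    omega
  obtain ⟨i, hiq, hi⟩ := hbad
  obtain ⟨a, hPa, haq⟩ : ∃ a, inDownpath Ψ P a ∧ downRel Ψ a q := by
    rcases Relation.ReflTransGen.cases_tail hPq with rfl | h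
    · exact (hqP rfl i hiq hi).elim
    · exact h
  have hqa : (q : ℕ) = rowStart Ψ a := (hΨ.downRel_iff.mp haq).1
  have haq_lt : a < q := hΨ.lt_of_downRel haq
  obtain ⟨hia, hζ, haP⟩ := hal a q i hPa haq (hw ▸ w.isLt) hiq (hi.trans hw)
  have hai : a ≠ i := Fin.ne_of_val_ne (by omega)
  have hiq' : i ≠ q := Fin.ne_of_val_ne hiq.ne
  have hiΦ : (i, q) ∉ Φ := by rw [hmemΦ i hiq]; omega
  set Φ' := insert (i, q) Φ
  have hΦ' : Φ' ⊆ Dplus ℓ := Finset.insert_subset (mem_Dplus_iff.mpr hiq) hΦ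
  have hrowΦ' : ∀ x, x ≠ i → ∀ j, (x, j) ∈ Φ' ↔ (x, j) ∈ Φ := by
    simp +contextual [Φ', Prod.ext_iff]
  have hstraight : catalanFn Φ' γ = 0 :=
    catalanFn_insert_eq_zero hΦ hw hqw hrow hmemΦ hiq hi (fun i' hi' h =>
      Fin.ext ((hal a q i' hPa haq (hw ▸ w.isLt) hi' (h.trans hw)).1.trans hia.symm)) hγ
  have hnext : catalanFn Φ' (γ + rootVec (i, q)) = 0 := by
    refine ih a haq_lt i hPa hia (fun h j hj => hia ▸ haP h j hj) Φ' _ hΦ'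
      (fun i' hi' j => ?_) (fun j => ?_) ?_ ?_ (fun i' hi' => ?_)
    · rw [hrowΦ' i' (Fin.ne_of_val_ne (by omega))]
      exact habove i' (by omega) j
    · rw [hrowΦ' a hai, hmemΦ a haq_lt]
      simp only [Φ', Finset.mem_insert, Prod.ext_iff, true_and, hmemΦ i hiq, Fin.ext_iff]
      omega
    · rw [hrowΦ' a hai, hmemΦ a haq_lt]
      omega
    · simp [rootVec, hai, haq_lt.ne, hiq', hγζ a haq_lt, hγζ i hiq, hζ]
    · have hi'i : i' ≠ i := Fin.ne_of_val_ne (by omega)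
      have hi'q : i' ≠ q := Fin.ne_of_val_ne (by omega)
      simp [rootVec, hi'i, hi'q, hγζ i' (by omega)]
  rw [catalanFn_eq_insert_sub hΦ hiΦ (mem_Dplus_iff.mpr hiq), hstraight, hnext, mul_zero,
    sub_zero]

end Downpaths

section StyleConditions

variable {ℓ : ℕ} {Ψ : Finset (Fin ℓ × Fin ℓ)}

lemma extendFinZ_coe (γ : Fin ℓ → ℤ) (i : Fin ℓ) : extendFinZ γ i = γ i :=
  dif_pos i.isLt

lemma styleZN_coe (Ψ : Finset (Fin ℓ × Fin ℓ)) (γ : Fin ℓ → ℤ) (i : Fin ℓ) :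
    styleZN Ψ γ i = nrN Ψ i + γ i := by
  rw [styleZN, extendFinZ_coe]

lemma IsRootIdeal.lt_of_downRel_of_nrN (hΨ : IsRootIdeal Ψ) {r : ℕ}
    (h2 : ∀ i, i ≤ r → r - i ≤ nrN Ψ i) {x y : Fin ℓ} (h : downRel Ψ x y) : r < y := by
  have hy := (hΨ.downRel_iff.mp h).1
  have := hΨ.lt_of_downRel h
  rcases le_or_gt (x : ℕ) r with hx | hx
  · have := h2 x hx
    simp only [rowStart] at hy
    omega
  · exact hx.trans this

lemma IsRootIdeal.lt_of_inDownpath_of_nrN (hΨ : IsRootIdeal Ψ) {r : ℕ}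
    (h2 : ∀ i, i ≤ r → r - i ≤ nrN Ψ i) {P z : Fin ℓ} (hz : inDownpath Ψ P z) (hzP : z ≠ P) :
    r < z := by
  rcases Relation.ReflTransGen.cases_tail hz with rfl | ⟨x, -, hxz⟩
  · exact (hzP rfl).elim
  · exact hΨ.lt_of_downRel_of_nrN h2 hxz

/-- As `q + 1 < ℓ`, the second argument of the `min` in (3) is too large at both rows, so both have
style `k`. -/
lemma eq_succ_of_rowStart_of_style {k r : ℕ} {η : Fin ℓ → ℤ}
    (h1 : ∀ i j, r ≤ i → i ≤ j → j < ℓ → extendFinZ η j ≤ extendFinZ η i)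
    (h3b : ∀ i, r < i → i < ℓ →
      styleZN Ψ η i = min (k : ℤ) ((ℓ : ℤ) - 1 - i + extendFinZ η i))
    {a i : Fin ℓ} {q : ℕ} (hra : r < a) (hai : a < i) (hq : q + 1 < ℓ)
    (ha : rowStart Ψ a = q) (hi : rowStart Ψ i = q + 1) : (i : ℕ) = a + 1 ∧ η a = η i := by
  have hsa := h3b a hra a.isLt
  have hsi := h3b i (hra.trans hai) i.isLt
  have hη := h1 a i hra.le hai.le i.isLt
  simp only [styleZN_coe, extendFinZ_coe, rowStart] at hsa hsi hη ha hi
  omega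

lemma eq_succ_of_rowStart_of_style_at_start {k r p : ℕ} {η : Fin ℓ → ℤ} (hΨ : IsRootIdeal Ψ)
    (h1 : ∀ i j, r ≤ i → i ≤ j → j < ℓ → extendFinZ η j ≤ extendFinZ η i)
    (h3b : ∀ i, r < i → i < ℓ →
      styleZN Ψ η i = min (k : ℤ) ((ℓ : ℤ) - 1 - i + extendFinZ η i))
    (h4 : styleZN Ψ η p < (k : ℤ))
    (h5 : p < r → nrN Ψ p = nrN Ψ (p + 1) →
      nrN Ψ (p + 1) ≤ nrN Ψ (p + 2) ∧ extendFinZ η p = extendFinZ η (p + 1) - 1)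
    {P i : Fin ℓ} (hP : (P : ℕ) = p) (hpr : p ≤ r) (hPi : P < i) {q : ℕ} (hq : q + 1 < ℓ)
    (hPq : rowStart Ψ P = q) (hnext : q < rowStart Ψ (P + 1)) (hi : rowStart Ψ i = q + 1) :
    p < r ∧ (i : ℕ) = P + 1 ∧ η P + 1 = η i := by
  subst hP
  have hpr' : (P : ℕ) < r := by
    by_contra hpr'
    have hsi := h3b i (by omega) i.isLt
    have hη := h1 r i le_rfl (by omega) i.isLt
    rw [show r = P by omega, extendFinZ_coe] at hη
    simp only [styleZN_coe, extendFinZ_coe, rowStart] at hsi h4 hη hPq hi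
    omega
  have hmono := hΨ.rowStart_mono (show (P : ℕ) + 1 ≤ i by omega) i.isLt
  have hnr : nrN Ψ P = nrN Ψ (P + 1) := by simp only [rowStart] at hPq hnext hi hmono; omega
  obtain ⟨hnr2, hη⟩ := h5 hpr' hnr
  have hiP : (i : ℕ) = P + 1 := by
    by_contra hne
    have := hΨ.rowStart_mono (show (P : ℕ) + 2 ≤ i by omega) i.isLt
    simp only [rowStart] at this hi hnext hPq
    omega
  rw [← hiP, extendFinZ_coe, extendFinZ_coe] at hη
  exact ⟨hpr', hiP, by omega⟩

lemma IsRootIdeal.downpathAligned {k r p : ℕ} {η : Fin ℓ → ℤ} (hΨ : IsRootIdeal Ψ)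
    (h1 : ∀ i j, r ≤ i → i ≤ j → j < ℓ → extendFinZ η j ≤ extendFinZ η i)
    (h2 : ∀ i, i ≤ r → r - i ≤ nrN Ψ i)
    (h3b : ∀ i, r < i → i < ℓ →
      styleZN Ψ η i = min (k : ℤ) ((ℓ : ℤ) - 1 - i + extendFinZ η i))
    (h4 : styleZN Ψ η p < (k : ℤ))
    (h5 : p < r → nrN Ψ p = nrN Ψ (p + 1) →
      nrN Ψ (p + 1) ≤ nrN Ψ (p + 2) ∧ extendFinZ η p = extendFinZ η (p + 1) - 1)
    {P : Fin ℓ} (hP : (P : ℕ) = p) (hpr : p ≤ r) :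
    DownpathAligned Ψ (η + Pi.single P 1) P := by
  intro a q i hPa haq hq hiq hi
  obtain ⟨hqa, hnext⟩ := hΨ.downRel_iff.mp haq
  have hai : a < i := by
    by_contra! hia
    have := hΨ.rowStart_mono (Fin.le_def.mp hia) a.isLt
    omega
  rcases eq_or_ne a P with rfl | haP
  · obtain ⟨hpr', hia, hη⟩ :=
      eq_succ_of_rowStart_of_style_at_start hΨ h1 h3b h4 h5 hP hpr hai hq hqa.symm (hqa ▸ hnext) hi
    refine ⟨hia, ?_, fun _ j hj => ?_⟩
    · simp [hai.ne', hη]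
    · have := h2 j (by omega)
      simp only [rowStart]
      omega
  · have hra := hΨ.lt_of_inDownpath_of_nrN h2 hPa haP
    obtain ⟨hia, hη⟩ := eq_succ_of_rowStart_of_style h1 h3b hra hai hq hqa.symm hi
    have hiP : i ≠ P := Fin.ne_of_val_ne (by omega)
    exact ⟨hia, by simp [haP, hiP, hη], fun h => (haP h).elim⟩

lemma IsRootIdeal.catalanFn_PsiZ_eq_zero {k r : ℕ} {η : Fin ℓ → ℤ} (hΨ : IsRootIdeal Ψ)
    (h1 : ∀ i j, r ≤ i → i ≤ j → j < ℓ → extendFinZ η j ≤ extendFinZ η i)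
    (h2 : ∀ i, i ≤ r → r - i ≤ nrN Ψ i)
    (h3b : ∀ i, r < i → i < ℓ →
      styleZN Ψ η i = min (k : ℤ) ((ℓ : ℤ) - 1 - i + extendFinZ η i))
    {P : Fin ℓ} (hPr : (P : ℕ) ≤ r) (hal : DownpathAligned Ψ (η + Pi.single P 1) P)
    {z : Fin ℓ} (hz : inDownpath Ψ P z) (hzP : z ≠ P)
    (hle : ¬extendFinZ η (z + 1) < extendFinZ η z) :
    catalanFn (PsiZ Ψ z) (η + Pi.single P 1 - Pi.single z 1) = 0 := by
  have hrz := hΨ.lt_of_inDownpath_of_nrN h2 hz hzP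
  have hPsiZ : PsiZ Ψ z ⊆ Dplus ℓ := Finset.sdiff_subset.trans hΨ.1
  rw [extendFinZ_coe] at hle
  rcases (Nat.succ_le_of_lt z.isLt).eq_or_lt with hlast | hlt
  · refine catalanFn_eq_zero_of_last_neg hPsiZ hlast ?_
    rw [extendFinZ, dif_neg (by omega)] at hle
    simp [hzP]
    omega
  set w : Fin ℓ := ⟨z + 1, hlt⟩
  have hη : η w = η z := by
    have := h1 z w hrz.le (Nat.le_succ _) w.isLt
    rw [extendFinZ_coe, extendFinZ_coe] at this
    rw [show extendFinZ η (z + 1) = η w from extendFinZ_coe η w] at hle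
    omega
  have hstart : rowStart Ψ w ≤ rowStart Ψ z + 1 := by
    have hsz := h3b z hrz z.isLt
    have hsw := h3b w (by simp [w]; omega) w.isLt
    simp only [styleZN_coe, extendFinZ_coe, hη, rowStart] at hsz hsw ⊢
    simp only [w] at hsw ⊢
    omega
  have hPw : P ≠ w := Fin.ne_of_val_ne (by simp [w]; omega)
  refine hΨ.catalanFn_eq_zero_of_downpathAligned hal z w hz rfl (fun h => (hzP h).elim) _ _ hPsiZ
    (fun i hi => mem_PsiZ_of_ne (Fin.ne_of_val_ne hi.ne)) (hΨ.mem_PsiZ_iff_succ rfl hstart)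
    (hΨ.notMem_PsiZ_succ rfl) ?_ fun i hi => ?_
  · simp [hzP.symm, hPw, (Fin.ne_of_val_ne (by simp [w]) : w ≠ z), hη]
  · simp [Pi.single_apply, Fin.ne_of_val_ne hi.ne]

end StyleConditions

theorem catalanFn_downpath_expansion_general (k : ℕ) {ℓ : ℕ}
    (Ψ : Finset (Fin ℓ × Fin ℓ)) (hΨ : IsRootIdeal Ψ) (η : Fin ℓ → ℤ)
    (r p : ℕ) (hr : r < ℓ) (hp : p ≤ r)
    (h1 : ∀ i j, r ≤ i → i ≤ j → j < ℓ → extendFinZ η j ≤ extendFinZ η i)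
    (h2 : ∀ i, i ≤ r → r - i ≤ nrN Ψ i)
    (h3b : ∀ i, r < i → i < ℓ →
      styleZN Ψ η i = min (k : ℤ) ((ℓ : ℤ) - 1 - i + extendFinZ η i))
    (h4 : styleZN Ψ η p < (k : ℤ))
    (h5 : p < r → nrN Ψ p = nrN Ψ (p + 1) →
      nrN Ψ (p + 1) ≤ nrN Ψ (p + 2) ∧ extendFinZ η p = extendFinZ η (p + 1) - 1) :
    catalanFn Ψ η =
      ∑ z ∈ Finset.univ.filter (fun z : Fin ℓ =>
          inDownpath Ψ ⟨p, lt_of_le_of_lt hp hr⟩ z ∧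
            ((z : ℕ) = p ∨ extendFinZ η ((z : ℕ) + 1) < extendFinZ η (z : ℕ))),
        tC ^ bounceCount Ψ ⟨p, lt_of_le_of_lt hp hr⟩ z *
          catalanFn (PsiZ Ψ z)
            (fun a => η a + (if (a : ℕ) = p then 1 else 0) -
              (if a = z then 1 else 0)) := by
  set P : Fin ℓ := ⟨p, lt_of_le_of_lt hp hr⟩
  have hal := hΨ.downpathAligned h1 h2 h3b h4 h5 (P := P) rfl hp
  have hweight : ∀ z : Fin ℓ, (fun a : Fin ℓ => η a + (if (a : ℕ) = p then 1 else 0) -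
      (if a = z then 1 else 0)) = η + Pi.single P 1 - Pi.single z 1 := by
    intro z
    ext a
    simp [Pi.single_apply, P, Fin.ext_iff]
  simp only [hweight]
  rw [← Finset.filter_filter, Finset.sum_filter_of_ne fun z hz hne => ?_]
  · rw [← hΨ.catalanFn_eq_sum_downpath, add_sub_cancel_right]
  · by_contra hcond
    obtain ⟨hzp, hle⟩ := not_or.mp hcond
    refine hne ?_
    rw [hΨ.catalanFn_PsiZ_eq_zero h1 h2 h3b hp hal (Finset.mem_filter.mp hz).2
      (fun h => hzp (congrArg Fin.val h)) hle, mul_zero]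

/-- downpath expansion lemma.  Let `(Ψ,η)` be an indexed root
ideal of length `ℓ`, `r ∈ [ℓ]`, `p ∈ [r]` (0-based indices `p ≤ r < ℓ` below),
satisfying conditions (1)–(5).  Then
`H(Ψ;η) = ∑_{z ∈ downpath_Ψ(p), z = p or η_z > η_{z+1}}
t^{B_Ψ(p,z)} H(Ψ^z; η + ε_p - ε_z)`, with the convention `η_{ℓ+1} = 0`. -/
theorem catalanFn_downpath_expansion (k : ℕ) (hk : 1 ≤ k) {ℓ : ℕ}
    (Ψ : Finset (Fin ℓ × Fin ℓ)) (hΨ : IsRootIdeal Ψ) (η : Fin ℓ → ℤ)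
    (r p : ℕ) (hr : r < ℓ) (hp : p ≤ r)
    (h1 : ∀ i j, r ≤ i → i ≤ j → j < ℓ → extendFinZ η j ≤ extendFinZ η i)
    (h2 : ∀ i, i ≤ r → r - i ≤ nrN Ψ i)
    (h3a : ∀ i, i ≤ r → styleZN Ψ η i ≤ (k : ℤ))
    (h3b : ∀ i, r < i → i < ℓ →
      styleZN Ψ η i = min (k : ℤ) ((ℓ : ℤ) - 1 - i + extendFinZ η i))
    (h4 : styleZN Ψ η p < (k : ℤ))
    (h5 : p < r → nrN Ψ p = nrN Ψ (p + 1) →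
      nrN Ψ (p + 1) ≤ nrN Ψ (p + 2) ∧ extendFinZ η p = extendFinZ η (p + 1) - 1) :
    catalanFn Ψ η =
      ∑ z ∈ Finset.univ.filter (fun z : Fin ℓ =>
          inDownpath Ψ ⟨p, lt_of_le_of_lt hp hr⟩ z ∧
            ((z : ℕ) = p ∨ extendFinZ η ((z : ℕ) + 1) < extendFinZ η (z : ℕ))),
        tC ^ bounceCount Ψ ⟨p, lt_of_le_of_lt hp hr⟩ z *
          catalanFn (PsiZ Ψ z)
            (fun a => η a + (if (a : ℕ) = p then 1 else 0) -
              (if a = z then 1 else 0)) :=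
  catalanFn_downpath_expansion_general k Ψ hΨ η r p hr hp h1 h2 h3b h4 h5

end
end

section
/- Let i ∈ [r], and let α and α⁻ = α − ε_i both be pseudopartitions of length r with α_i ≥ α_{i−1}. Let n = (n_1,…,n_r) ∈ [r]^r and n⁺ = n + ε_i both be weakly increasing. Then CTAB_α(n) is the disjoint union of CTAB_α(n⁺) and the set of tableaux obtained from elements U of CTAB_{α⁻}(n) by adjoining a box containing the entry n_i at the left end of row i. -/
/-!
The leftmost entry `x` of row `i₀` of a tableau in `CTAB_α(n)` satisfies `x ≥ n_{i₀}`. If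
`x > n_{i₀}`, the tableau already lies in `CTAB_α(n⁺)`: raising the flag only affects row `i₀`
itself and condition (IV) between rows `i₀ - 1` and `i₀`, which is vacuous as
`α_{i₀-1} ≤ α_{i₀}`. If `x = n_{i₀}`, deleting that box leaves a tableau of `CTAB_{α⁻}(n)`;
conversely, adjoining a box with entry `n_{i₀}` keeps the columns strict because
`n_{i₀} < n_{i₀+1}` bounds the entry below it, and keeps the rows weak because every entry of
row `i₀` is at least `n_{i₀}`.
-/

open scoped BigOperators Classical

noncomputable section

section CTAB

/-- A pseudopartition of length `r`: `α ∈ ℕ^r` with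
`α_1 + r - 1 ≥ α_2 + r - 2 ≥ ⋯ ≥ α_r`. -/
def IsPseudoPartition {r : ℕ} (α : Fin r → ℕ) : Prop :=
  ∀ i j : Fin r, i ≤ j → (α j : ℤ) + (i : ℤ) ≤ (α i : ℤ) + (j : ℤ)

/-- A member of `CTAB_α(n)`: a filling of the right-justified diagram of the
pseudopartition `α` (row `i < r` has boxes in positions `q = 1, …, α_i`, where `q`
counts columns from the *right*; this matches `diagram(α) = {(i,j) : m - α_i < j ≤ m}`
with `m = max α`), recorded as a function `F` that is zero off the boxes, such that
(I) entries weakly increase from left to right in rows, (II) entries strictly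
increase down columns, (III) entries in row `i` lie in `{n_i, …, r}`, and (IV) if
row `i` has a box in a column where row `i+1` does not, then its entry is `< n_{i+1}`. -/
def IsCTAB (r : ℕ) (α nf : ℕ → ℕ) (F : ℕ → ℕ → ℕ) : Prop :=
  (∀ i q, ¬(i < r ∧ 1 ≤ q ∧ q ≤ α i) → F i q = 0) ∧
  (∀ i q, i < r → 1 ≤ q → q + 1 ≤ α i → F i (q + 1) ≤ F i q) ∧
  (∀ i q, i + 1 < r → 1 ≤ q → q ≤ α i → q ≤ α (i + 1) → F i q < F (i + 1) q) ∧
  (∀ i q, i < r → 1 ≤ q → q ≤ α i → nf i ≤ F i q ∧ F i q ≤ r) ∧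
  (∀ i q, i + 1 < r → α (i + 1) < q → q ≤ α i → F i q < nf (i + 1))

/-- Adjoin to a filling a box with entry `x` at position `q0` (counted from the
right) of row `i0`; adjoining at the left end of row `i0` of `diagram(α - ε_{i0})`
is `addBox i0 (α i0) x`. -/
def addBox (i0 q0 x : ℕ) (F : ℕ → ℕ → ℕ) : ℕ → ℕ → ℕ :=
  fun i q => if i = i0 ∧ q = q0 then x else F i q

/-- The column reading word of a member of `CTAB_α(n)` (with `m = max α`):
columns left to right (`q = m` down to `1`), each column bottom to top. -/
def creadingCTAB (r m : ℕ) (α : ℕ → ℕ) (F : ℕ → ℕ → ℕ) : List ℕ :=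
  (List.range m).flatMap fun c =>
    ((List.range r).reverse).filterMap fun i =>
      if 1 ≤ m - c ∧ m - c ≤ α i then some (F i (m - c)) else none

end CTAB

theorem extendFin_coe {ℓ : ℕ} (μ : Fin ℓ → ℕ) (i : Fin ℓ) : extendFin μ i = μ i :=
  dif_pos i.isLt

theorem extendFin_update {ℓ : ℕ} (μ : Fin ℓ → ℕ) (i : Fin ℓ) (x : ℕ) :
    extendFin (Function.update μ i x) = Function.update (extendFin μ) i x := by
  funext j
  by_cases hj : j < ℓ
  · rcases eq_or_ne j i with rfl | h
    · simp [extendFin_coe]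
    · have h' : (⟨j, hj⟩ : Fin ℓ) ≠ i := fun e => h (congrArg Fin.val e)
      simp [extendFin, hj, Function.update_of_ne h, Function.update_of_ne h']
  · have h : j ≠ i := by omega
    simp [extendFin, hj, Function.update_of_ne h]

section

variable {r i₀ : ℕ} {A N : ℕ → ℕ} {F G : ℕ → ℕ → ℕ}

theorem addBox_apply_self (i q x : ℕ) (F : ℕ → ℕ → ℕ) : addBox i q x F i q = x := by
  simp [addBox]

theorem addBox_apply_of_ne {i q x j p : ℕ} (h : ¬(j = i ∧ p = q)) :
    addBox i q x F j p = F j p :=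
  if_neg h

theorem addBox_addBox (i q x y : ℕ) (F : ℕ → ℕ → ℕ) :
    addBox i q x (addBox i q y F) = addBox i q x F := by
  funext j p
  by_cases h : j = i ∧ p = q <;> simp [addBox, h]

theorem addBox_apply_eq_self (i q : ℕ) (F : ℕ → ℕ → ℕ) : addBox i q (F i q) F = F := by
  funext j p
  by_cases h : j = i ∧ p = q
  · obtain ⟨rfl, rfl⟩ := h; exact addBox_apply_self ..
  · exact addBox_apply_of_ne h

theorem update_pred_le (A : ℕ → ℕ) (i₀ j : ℕ) : Function.update A i₀ (A i₀ - 1) j ≤ A j := by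
  rcases eq_or_ne j i₀ with rfl | h
  · simp
  · simp [h]

theorem le_update_pred {j q : ℕ} (hq : q ≤ A j) (h : ¬(j = i₀ ∧ q = A i₀)) :
    q ≤ Function.update A i₀ (A i₀ - 1) j := by
  rcases eq_or_ne j i₀ with rfl | h'
  · rw [Function.update_self]; omega
  · rwa [Function.update_of_ne h']

theorem lt_of_update_pred_lt {j q : ℕ} (hq : Function.update A i₀ (A i₀ - 1) j < q)
    (h : ¬(j = i₀ ∧ q = A i₀)) : A j < q := by
  rcases eq_or_ne j i₀ with rfl | h'
  · rw [Function.update_self] at hq; omega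
  · rwa [Function.update_of_ne h'] at hq

theorem not_eq_of_le_update_pred (hpos : 0 < A i₀) {j q : ℕ}
    (hq : q ≤ Function.update A i₀ (A i₀ - 1) j) : ¬(j = i₀ ∧ q = A i₀) := by
  rintro ⟨rfl, rfl⟩
  rw [Function.update_self] at hq
  omega

theorem IsCTAB.antitone_row (hF : IsCTAB r A N F) {i q q' : ℕ} (hi : i < r) (hq : 1 ≤ q)
    (hqq' : q ≤ q') (hq' : q' ≤ A i) : F i q' ≤ F i q := by
  induction q', hqq' using Nat.le_induction with
  | base => exact le_rfl
  | succ p hp ih => exact (hF.2.1 i p hi (by omega) hq').trans (ih (by omega))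

theorem isCTAB_update_flag_iff (hi : i₀ < r) (hpos : 0 < A i₀) (hprev : A (i₀ - 1) ≤ A i₀) :
    IsCTAB r A (Function.update N i₀ (N i₀ + 1)) F ↔ IsCTAB r A N F ∧ N i₀ < F i₀ (A i₀) := by
  have hvac : ∀ j q, j + 1 = i₀ → A (j + 1) < q → q ≤ A j → False := by
    rintro j q rfl hlt hle
    rw [Nat.add_sub_cancel] at hprev
    omega
  constructor
  · rintro ⟨f0, f1, f2, f3, f4⟩
    have hbound := (f3 i₀ (A i₀) hi hpos le_rfl).1
    rw [Function.update_self] at hbound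
    refine ⟨⟨f0, f1, f2, fun j q hj hq hqA => ?_, fun j q hj hlt hle => ?_⟩, hbound⟩
    · have := f3 j q hj hq hqA
      rcases eq_or_ne j i₀ with rfl | h
      · rw [Function.update_self] at this; omega
      · rwa [Function.update_of_ne h] at this
    · rcases eq_or_ne (j + 1) i₀ with h | h
      · exact (hvac j q h hlt hle).elim
      · simpa [Function.update_of_ne h] using f4 j q hj hlt hle
  · rintro ⟨hF, hlt⟩
    have hmin : ∀ q, 1 ≤ q → q ≤ A i₀ → F i₀ (A i₀) ≤ F i₀ q := fun q hq hqA =>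
      hF.antitone_row hi hq hqA le_rfl
    obtain ⟨f0, f1, f2, f3, f4⟩ := hF
    refine ⟨f0, f1, f2, fun j q hj hq hqA => ?_, fun j q hj hlt hle => ?_⟩
    · have := f3 j q hj hq hqA
      rcases eq_or_ne j i₀ with rfl | h
      · have := hmin q hq hqA
        rw [Function.update_self]; omega
      · rwa [Function.update_of_ne h]
    · rcases eq_or_ne (j + 1) i₀ with h | h
      · exact (hvac j q h hlt hle).elim
      · simpa [Function.update_of_ne h] using f4 j q hj hlt hle

theorem IsCTAB.adjoinBox (hG : IsCTAB r (Function.update A i₀ (A i₀ - 1)) N G) (hi : i₀ < r)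
    (hpos : 0 < A i₀) (hstep : i₀ + 1 < r → N i₀ < N (i₀ + 1)) (hNr : N i₀ ≤ r) :
    IsCTAB r A N (addBox i₀ (A i₀) (N i₀) G) := by
  obtain ⟨g0, g1, g2, g3, g4⟩ := hG
  refine ⟨fun j q hout => ?_, fun j q hj hq hqA => ?_, fun j q hj hq hqA hqA' => ?_,
    fun j q hj hq hqA => ?_, fun j q hj hlt hle => ?_⟩
  · rw [addBox_apply_of_ne (by rintro ⟨rfl, rfl⟩; exact hout ⟨hi, hpos, le_rfl⟩)]
    exact g0 j q fun ⟨hj, hq, hqA⟩ => hout ⟨hj, hq, hqA.trans (update_pred_le A i₀ j)⟩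
  · have hb : ¬(j = i₀ ∧ q = A i₀) := by rintro ⟨rfl, rfl⟩; omega
    by_cases hb' : j = i₀ ∧ q + 1 = A i₀
    · obtain ⟨rfl, hq1⟩ := hb'
      rw [addBox_apply_of_ne hb, ← hq1, addBox_apply_self]
      exact (g3 j q hj hq (le_update_pred (by omega) hb)).1
    · rw [addBox_apply_of_ne hb, addBox_apply_of_ne hb']
      exact g1 j q hj hq (le_update_pred hqA hb')
  · by_cases hb : j = i₀ ∧ q = A i₀
    · obtain ⟨rfl, rfl⟩ := hb
      rw [addBox_apply_self, addBox_apply_of_ne (by omega)]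
      exact (hstep hj).trans_le (g3 (j + 1) (A j) hj hq (le_update_pred hqA' (by omega))).1
    by_cases hb' : j + 1 = i₀ ∧ q = A i₀
    · obtain ⟨rfl, rfl⟩ := hb'
      rw [addBox_apply_self, addBox_apply_of_ne hb]
      exact g4 j _ hj (by rw [Function.update_self]; omega) (le_update_pred hqA hb)
    · rw [addBox_apply_of_ne hb, addBox_apply_of_ne hb']
      exact g2 j q hj hq (le_update_pred hqA hb) (le_update_pred hqA' hb')
  · by_cases hb : j = i₀ ∧ q = A i₀
    · obtain ⟨rfl, rfl⟩ := hb
      rw [addBox_apply_self]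
      exact ⟨le_rfl, hNr⟩
    · rw [addBox_apply_of_ne hb]
      exact g3 j q hj hq (le_update_pred hqA hb)
  · by_cases hb : j = i₀ ∧ q = A i₀
    · obtain ⟨rfl, rfl⟩ := hb
      rw [addBox_apply_self]
      exact hstep hj
    · rw [addBox_apply_of_ne hb]
      exact g4 j q hj ((update_pred_le A i₀ _).trans_lt hlt) (le_update_pred hle hb)

theorem IsCTAB.removeBox (hF : IsCTAB r A N F) (hpos : 0 < A i₀) (hx : F i₀ (A i₀) = N i₀) :
    IsCTAB r (Function.update A i₀ (A i₀ - 1)) N (addBox i₀ (A i₀) 0 F) := by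
  obtain ⟨f0, f1, f2, f3, f4⟩ := hF
  have hle := update_pred_le A i₀
  have hne : ∀ {j q}, q ≤ Function.update A i₀ (A i₀ - 1) j → ¬(j = i₀ ∧ q = A i₀) :=
    not_eq_of_le_update_pred hpos
  refine ⟨fun j q hout => ?_, fun j q hj hq hqA => ?_, fun j q hj hq hqA hqA' => ?_,
    fun j q hj hq hqA => ?_, fun j q hj hlt hle' => ?_⟩
  · by_cases hb : j = i₀ ∧ q = A i₀
    · obtain ⟨rfl, rfl⟩ := hb
      exact addBox_apply_self ..
    · rw [addBox_apply_of_ne hb]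
      exact f0 j q fun ⟨hj, hq, hqA⟩ => hout ⟨hj, hq, le_update_pred hqA hb⟩
  · rw [addBox_apply_of_ne (hne hqA), addBox_apply_of_ne (hne (by omega))]
    exact f1 j q hj hq (hqA.trans (hle j))
  · rw [addBox_apply_of_ne (hne hqA), addBox_apply_of_ne (hne hqA')]
    exact f2 j q hj hq (hqA.trans (hle j)) (hqA'.trans (hle (j + 1)))
  · rw [addBox_apply_of_ne (hne hqA)]
    exact f3 j q hj hq (hqA.trans (hle j))
  · rw [addBox_apply_of_ne (hne hle')]
    by_cases hb : j + 1 = i₀ ∧ q = A i₀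
    · obtain ⟨rfl, rfl⟩ := hb
      -- the removed box lies directly below `(j, q)`
      exact hx ▸ f2 j _ hj hpos (hle'.trans (hle j)) le_rfl
    · exact f4 j q hj (lt_of_update_pred_lt hlt hb) (hle'.trans (hle j))

theorem setOf_isCTAB_eq_union (hi : i₀ < r) (hpos : 0 < A i₀) (hprev : A (i₀ - 1) ≤ A i₀)
    (hstep : i₀ + 1 < r → N i₀ < N (i₀ + 1)) (hNr : N i₀ ≤ r) :
    {F | IsCTAB r A N F} = {F | IsCTAB r A (Function.update N i₀ (N i₀ + 1)) F} ∪
      addBox i₀ (A i₀) (N i₀) '' {G | IsCTAB r (Function.update A i₀ (A i₀ - 1)) N G} := by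
  ext F
  simp only [Set.mem_ofPred_eq, Set.mem_union, Set.mem_image, isCTAB_update_flag_iff hi hpos hprev]
  constructor
  · intro hF
    rcases (hF.2.2.2.1 i₀ (A i₀) hi hpos le_rfl).1.lt_or_eq with hlt | heq
    · exact Or.inl ⟨hF, hlt⟩
    · refine Or.inr ⟨_, hF.removeBox hpos heq.symm, ?_⟩
      rw [addBox_addBox, heq, addBox_apply_eq_self]
  · rintro (⟨hF, -⟩ | ⟨G, hG, rfl⟩)
    · exact hF
    · exact hG.adjoinBox hi hpos hstep hNr

theorem disjoint_setOf_isCTAB (hi : i₀ < r) (hpos : 0 < A i₀) :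
    Disjoint {F | IsCTAB r A (Function.update N i₀ (N i₀ + 1)) F}
      (addBox i₀ (A i₀) (N i₀) '' {G | IsCTAB r (Function.update A i₀ (A i₀ - 1)) N G}) := by
  rw [Set.disjoint_left]
  rintro F hF ⟨G, -, rfl⟩
  have := (hF.2.2.2.1 i₀ (A i₀) hi hpos le_rfl).1
  rw [Function.update_self, addBox_apply_self] at this
  omega

end

/-- Let `i₀ ∈ [r]`, and let `α` and `α⁻ = α - ε_{i₀}` both be
pseudopartitions of length `r` with `α_{i₀} ≥ α_{i₀-1}`.  Let `n ∈ [r]^r` and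
`n⁺ = n + ε_{i₀}` both be weakly increasing.  Then `CTAB_α(n)` is the disjoint
union of `CTAB_α(n⁺)` and the image of `CTAB_{α⁻}(n)` under adjoining a box with
entry `n_{i₀}` at the left end of row `i₀`. -/
theorem ctab_decomposition (r : ℕ) (i0 : Fin r) (α : Fin r → ℕ) (hpos : 0 < α i0)
    (hprev : ∀ _ : 0 < (i0 : ℕ),
      α ⟨(i0 : ℕ) - 1, by have := i0.isLt; omega⟩ ≤ α i0)
    (nf : Fin r → ℕ) (hnf : ∀ j, 1 ≤ nf j ∧ nf j ≤ r)
    (hmono' : Monotone fun j => nf j + if j = i0 then 1 else 0) :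
    {F | IsCTAB r (extendFin α) (extendFin nf) F} =
        {F | IsCTAB r (extendFin α)
            (extendFin fun j => nf j + if j = i0 then 1 else 0) F} ∪
          ((fun F => addBox (i0 : ℕ) (α i0) (nf i0) F) ''
            {F | IsCTAB r (extendFin fun j => α j - if j = i0 then 1 else 0)
              (extendFin nf) F}) ∧
      Disjoint
        {F | IsCTAB r (extendFin α)
            (extendFin fun j => nf j + if j = i0 then 1 else 0) F}
        ((fun F => addBox (i0 : ℕ) (α i0) (nf i0) F) ''
          {F | IsCTAB r (extendFin fun j => α j - if j = i0 then 1 else 0)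
            (extendFin nf) F}) := by
  have hα' : (fun j => α j - if j = i0 then 1 else 0) = Function.update α i0 (α i0 - 1) := by
    funext j; rcases eq_or_ne j i0 with rfl | h <;> simp [*]
  have hnf' : (fun j => nf j + if j = i0 then 1 else 0) = Function.update nf i0 (nf i0 + 1) := by
    funext j; rcases eq_or_ne j i0 with rfl | h <;> simp [*]
  have hprevA : extendFin α (i0 - 1) ≤ extendFin α i0 := by
    rcases Nat.eq_zero_or_pos (i0 : ℕ) with h | h
    · simp [h]
    · simpa [extendFin, show (i0 : ℕ) - 1 < r by omega] using hprev h
  have hstep (h : (i0 : ℕ) + 1 < r) : extendFin nf i0 < extendFin nf (i0 + 1) := by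
    have := hmono' (show i0 ≤ ⟨i0 + 1, h⟩ from Fin.le_def.mpr (Nat.le_succ _))
    simpa [extendFin, h, Fin.ext_iff] using this
  rw [hα', hnf', extendFin_update, extendFin_update, ← extendFin_coe α, ← extendFin_coe nf]
  rw [← extendFin_coe α] at hpos
  exact ⟨setOf_isCTAB_eq_union i0.isLt hpos hprevA hstep (extendFin_coe nf i0 ▸ (hnf i0).2),
    disjoint_setOf_isCTAB i0.isLt hpos⟩

end
end
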